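/- arXiv:2602.02924 — 4 statements merged into one kernel-verified Lean document; each statement's English description precedes it below -/
import Mathlib

section
/- Let μ be a σ-finite measure on a measurable space A, let Q, Q_c : A → ℝ be bounded measurable functions, let h ∈ ℝ, λ* ≥ 0, ρ > 0, β > 0, and assume 0 < ∫ exp(-L/β) dμ < ∞, where L(a) = -Q(a) + λ*·(Q_c(a) - h). Suppose that for μ-almost every a ∈ A one has Q_c(a) ≤ h and λ*·(Q_c(a) - h) = 0. Then: (i) L_A(a) = L(a) for μ-almost every a; (ii) the Gibbs probability measures of L_A and of L with respect to μ at temperature β coincide, i.e., exp(-L_A/β)/∫exp(-L_A/β)dμ = exp(-L/β)/∫exp(-L/β)dμ μ-a.e.; (iii) for every probability measure π on A with π ≪ μ, ∫ L_A dπ = ∫ L dπ, and hence the infimum of ∫ L_A dπ over all probability measures π ≪ μ equals the infimum of ∫ L dπ over the same class. -/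
open MeasureTheory

/-- **Theorem 1(b): at a KKT point, augmentation preserves the Gibbs policy and the
objective.**  Let `μ` be σ-finite, `Q, Q_c` bounded measurable, `h ∈ ℝ`, `λ* ≥ 0`, `ρ > 0`,
`β > 0`, with `0 < ∫ exp(-L/β) dμ` and `exp(-L/β)` integrable (so the integral is finite),
where `L(a) = -Q(a) + λ*(Q_c(a) - h)` and
`L_A(a) = -Q(a) + ((max(λ* + ρ(Q_c(a) - h), 0))² - λ*²)/(2ρ)`.
If for μ-a.e. `a` we have `Q_c(a) ≤ h` and `λ*(Q_c(a) - h) = 0`, then: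
(i) `L_A = L` μ-a.e.;
(ii) the Gibbs densities coincide μ-a.e.:
    `exp(-L_A/β)/∫exp(-L_A/β)dμ = exp(-L/β)/∫exp(-L/β)dμ`;
(iii) for every probability measure `π ≪ μ`, `∫ L_A dπ = ∫ L dπ`, hence the infimum of
    `∫ L_A dπ` over probability measures `π ≪ μ` equals that of `∫ L dπ`. -/
theorem kkt_augmentation_invariance
    {A : Type*} [MeasurableSpace A] (μ : Measure A) [SigmaFinite μ]
    (Q Qc : A → ℝ) (hQmeas : Measurable Q) (hQcmeas : Measurable Qc)
    (CQ CQc : ℝ) (hQbdd : ∀ a, |Q a| ≤ CQ) (hQcbdd : ∀ a, |Qc a| ≤ CQc)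
    (h lamStar ρ β : ℝ) (hlam : 0 ≤ lamStar) (hρ : 0 < ρ) (hβ : 0 < β)
    (L LA : A → ℝ)
    (hLdef : ∀ a, L a = -Q a + lamStar * (Qc a - h))
    (hLAdef : ∀ a, LA a =
      -Q a + ((max (lamStar + ρ * (Qc a - h)) 0) ^ 2 - lamStar ^ 2) / (2 * ρ))
    (hZint : Integrable (fun a => Real.exp (-L a / β)) μ)
    (hZpos : 0 < ∫ a, Real.exp (-L a / β) ∂μ)
    (hKKT : ∀ᵐ a ∂μ, Qc a ≤ h ∧ lamStar * (Qc a - h) = 0) :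
    (∀ᵐ a ∂μ, LA a = L a) ∧
    (∀ᵐ a ∂μ,
      Real.exp (-LA a / β) / (∫ b, Real.exp (-LA b / β) ∂μ)
        = Real.exp (-L a / β) / (∫ b, Real.exp (-L b / β) ∂μ)) ∧
    (∀ π : Measure A, IsProbabilityMeasure π → π ≪ μ →
      ∫ a, LA a ∂π = ∫ a, L a ∂π) ∧
    sInf {x : ℝ | ∃ π : Measure A, IsProbabilityMeasure π ∧ π ≪ μ ∧ x = ∫ a, LA a ∂π}
      = sInf {x : ℝ | ∃ π : Measure A, IsProbabilityMeasure π ∧ π ≪ μ ∧ x = ∫ a, L a ∂π} := by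

  have key : ∀ᵐ a ∂μ, LA a = L a := by
    filter_upwards [hKKT] with a ⟨hle, hz⟩
    rw [hLAdef, hLdef, hz]
    rcases eq_or_lt_of_le hlam with hl0 | hlpos
    · have hmax : max (lamStar + ρ * (Qc a - h)) 0 = 0 := by
        rw [← hl0]
        simp only [zero_add]
        exact max_eq_right (mul_nonpos_of_nonneg_of_nonpos hρ.le (by linarith))
      rw [hmax, ← hl0]; ring
    · have : Qc a - h = 0 := by
        rcases mul_eq_zero.1 hz with h1 | h1
        · exact absurd h1 (ne_of_gt hlpos)
        · exact h1
      rw [this, mul_zero, add_zero, max_eq_left hlam]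
      ring
  refine ⟨key, ?_, ?_, ?_⟩
  · have hZeq : ∫ b, Real.exp (-LA b / β) ∂μ = ∫ b, Real.exp (-L b / β) ∂μ := by
      apply integral_congr_ae
      filter_upwards [key] with a ha; rw [ha]
    filter_upwards [key] with a ha
    rw [ha, hZeq]
  · intro π hπ hπμ
    apply integral_congr_ae
    exact hπμ.ae_le key
  · congr 1
    ext x
    constructor
    · rintro ⟨π, hπ, hπμ, rfl⟩
      exact ⟨π, hπ, hπμ, integral_congr_ae (hπμ.ae_le key)⟩
    · rintro ⟨π, hπ, hπμ, rfl⟩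
      exact ⟨π, hπ, hπμ, (integral_congr_ae (hπμ.ae_le key)).symm⟩
end

section
/- Let μ be a σ-finite measure on a measurable space, let β > 0 and ε ≥ 0, and let f, g be measurable real-valued functions with |f(a) - g(a)| ≤ ε for μ-almost every a, such that Z_f := ∫ exp(-f/β) dμ and Z_g := ∫ exp(-g/β) dμ both lie in (0, ∞). Define the normalized Gibbs densities w_f = exp(-f/β)/Z_f and w_g = exp(-g/β)/Z_g. Then the total-variation-type distance between the two Gibbs densities satisfies ∫ |w_f - w_g| dμ ≤ exp(2ε/β) - 1. -/
open MeasureTheory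

/-- **Total-variation stability of Gibbs densities under energy perturbation.**
Let `μ` be σ-finite, `β > 0`, `ε ≥ 0`, and `f, g` measurable with `|f - g| ≤ ε` μ-a.e.,
such that `Z_f = ∫ exp(-f/β) dμ` and `Z_g = ∫ exp(-g/β) dμ` are finite (the integrands are
integrable) and strictly positive.  With the normalized Gibbs densities
`w_f = exp(-f/β)/Z_f` and `w_g = exp(-g/β)/Z_g`, one has
`∫ |w_f - w_g| dμ ≤ exp(2ε/β) - 1`. -/
theorem gibbs_density_tv_bound
    {A : Type*} [MeasurableSpace A] (μ : Measure A) [SigmaFinite μ]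
    (β ε : ℝ) (hβ : 0 < β) (hε : 0 ≤ ε)
    (f g : A → ℝ) (hf : Measurable f) (hg : Measurable g)
    (hfg : ∀ᵐ a ∂μ, |f a - g a| ≤ ε)
    (hZf : Integrable (fun a => Real.exp (-f a / β)) μ)
    (hZfpos : 0 < ∫ a, Real.exp (-f a / β) ∂μ)
    (hZg : Integrable (fun a => Real.exp (-g a / β)) μ)
    (hZgpos : 0 < ∫ a, Real.exp (-g a / β) ∂μ) :
    ∫ a, |Real.exp (-f a / β) / (∫ b, Real.exp (-f b / β) ∂μ)
        - Real.exp (-g a / β) / (∫ b, Real.exp (-g b / β) ∂μ)| ∂μ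
      ≤ Real.exp (2 * ε / β) - 1 := by
  set Zf := ∫ b, Real.exp (-f b / β) ∂μ with hZfdef
  set Zg := ∫ b, Real.exp (-g b / β) ∂μ with hZgdef
  set c := Real.exp (ε / β) with hcdef
  have hc : (0:ℝ) < c := Real.exp_pos _
  have hE : Real.exp (2 * ε / β) = c * c := by
    rw [← Real.exp_add]; ring_nf
  -- pointwise exponential comparisons
  have hfg2 : ∀ᵐ a ∂μ, Real.exp (-f a / β) ≤ c * Real.exp (-g a / β) := by
    filter_upwards [hfg] with a ha
    rw [← Real.exp_add]
    apply Real.exp_le_exp.2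
    rw [← add_div]
    have h1 := (abs_le.1 ha).1
    gcongr
    linarith
  have hgf2 : ∀ᵐ a ∂μ, Real.exp (-g a / β) ≤ c * Real.exp (-f a / β) := by
    filter_upwards [hfg] with a ha
    rw [← Real.exp_add]
    apply Real.exp_le_exp.2
    rw [← add_div]
    have h1 := (abs_le.1 ha).2
    gcongr
    linarith
  -- partition function comparisons
  have hZfg : Zf ≤ c * Zg := by
    rw [hZfdef, hZgdef, ← integral_const_mul]
    exact integral_mono_ae hZf (hZg.const_mul c) hfg2
  have hZgf : Zg ≤ c * Zf := by
    rw [hZfdef, hZgdef, ← integral_const_mul]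
    exact integral_mono_ae hZg (hZf.const_mul c) hgf2
  -- pointwise bound on the densities
  have key : ∀ᵐ a ∂μ, |Real.exp (-f a / β) / Zf - Real.exp (-g a / β) / Zg|
      ≤ (c * c - 1) * (Real.exp (-g a / β) / Zg) := by
    filter_upwards [hfg2, hgf2] with a h1 h2
    set ef := Real.exp (-f a / β) with hef
    set eg := Real.exp (-g a / β) with heg
    have hef0 : 0 < ef := Real.exp_pos _
    have heg0 : 0 < eg := Real.exp_pos _
    have hwfg : ef / Zf ≤ (c * c) * (eg / Zg) := by
      rw [show (c * c) * (eg / Zg) = (c * c * eg) / Zg from (mul_div_assoc _ _ _).symm,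
        div_le_div_iff₀ hZfpos hZgpos]
      nlinarith [mul_le_mul h1 hZgf (le_of_lt hZgpos) (by positivity : (0:ℝ) ≤ c * eg)]
    have hwgf : eg / Zg ≤ (c * c) * (ef / Zf) := by
      rw [show (c * c) * (ef / Zf) = (c * c * ef) / Zf from (mul_div_assoc _ _ _).symm,
        div_le_div_iff₀ hZgpos hZfpos]
      nlinarith [mul_le_mul h2 hZfg (le_of_lt hZfpos) (by positivity : (0:ℝ) ≤ c * ef)]
    have hwf0 : 0 ≤ ef / Zf := le_of_lt (div_pos hef0 hZfpos)
    have hwg0 : 0 ≤ eg / Zg := le_of_lt (div_pos heg0 hZgpos)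
    rw [abs_sub_le_iff]
    constructor
    · linarith
    · nlinarith [mul_nonneg hwg0 (sq_nonneg (c * c - 1)), mul_pos hc hc, sq_nonneg c]
  -- integrate
  have hint1 : Integrable (fun a => |Real.exp (-f a / β) / Zf - Real.exp (-g a / β) / Zg|) μ :=
    ((hZf.div_const Zf).sub (hZg.div_const Zg)).abs
  have hint2 : Integrable (fun a => (c * c - 1) * (Real.exp (-g a / β) / Zg)) μ :=
    (hZg.div_const Zg).const_mul _
  calc ∫ a, |Real.exp (-f a / β) / Zf - Real.exp (-g a / β) / Zg| ∂μ
      ≤ ∫ a, (c * c - 1) * (Real.exp (-g a / β) / Zg) ∂μ :=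
        integral_mono_ae hint1 hint2 key
    _ = (c * c - 1) * (Zg / Zg) := by
        rw [integral_const_mul, integral_div]
    _ = Real.exp (2 * ε / β) - 1 := by
        rw [div_self (ne_of_gt hZgpos), mul_one, hE]
end

section
/- Let μ be a σ-finite measure on a measurable space, let β > 0 and ε ≥ 0, and let f, g be measurable real-valued functions with |f(a) - g(a)| ≤ ε for μ-almost every a, such that Z_f := ∫ exp(-f/β) dμ and Z_g := ∫ exp(-g/β) dμ both lie in (0, ∞). Let π_f and π_g be the Gibbs probability measures with densities w_f = exp(-f/β)/Z_f and w_g = exp(-g/β)/Z_g with respect to μ. Then the Kullback–Leibler divergence between the two Gibbs measures satisfies KL(π_f ‖ π_g) ≤ 2ε/β. -/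
/-!
Both Gibbs measures are exponential tilts of `μ`, so `π_f` is the tilt of `π_g` by
`h = (g - f) / β`, a function with `|h| ≤ ε / β` almost everywhere. The log-likelihood ratio
of a tilt `ν.tilted h` against `ν` is `h - log ∫ exp h dν`, and for a probability measure `ν`
the log-partition term `log ∫ exp h dν` is squeezed between `-ε / β` and `ε / β` as well, so
the integrand of the divergence is bounded by `2ε / β`.
-/

open MeasureTheory Real

namespace MeasureTheory

variable {α : Type*} [MeasurableSpace α]

lemma tilted_tilted_sub {μ : Measure α} {φ : α → ℝ} (hφ : Integrable (fun x ↦ exp (φ x)) μ)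
    (ψ : α → ℝ) : (μ.tilted φ).tilted (ψ - φ) = μ.tilted ψ := by
  rw [tilted_tilted hφ, add_sub_cancel]

lemma integrable_exp_sub_tilted {μ : Measure α} {φ ψ : α → ℝ}
    (hφ : Integrable (fun x ↦ exp (φ x)) μ) (hψ : Integrable (fun x ↦ exp (ψ x)) μ) :
    Integrable (fun x ↦ exp ((ψ - φ) x)) (μ.tilted φ) := by
  rw [integrable_tilted_iff hφ]
  refine hψ.congr (ae_of_all _ fun x ↦ ?_)
  simp only [Pi.sub_apply, smul_eq_mul, ← exp_add, add_sub_cancel]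

lemma abs_log_integral_exp_le {ν : Measure α} [IsProbabilityMeasure ν] {h : α → ℝ} {c : ℝ}
    (hint : Integrable (fun x ↦ exp (h x)) ν) (hc : ∀ᵐ x ∂ν, |h x| ≤ c) :
    |log (∫ x, exp (h x) ∂ν)| ≤ c := by
  have hlower : exp (-c) ≤ ∫ x, exp (h x) ∂ν := by
    calc exp (-c) = ∫ _, exp (-c) ∂ν := by simp
      _ ≤ ∫ x, exp (h x) ∂ν := integral_mono_ae (integrable_const _) hint <| by
          filter_upwards [hc] with x hx using exp_le_exp.mpr (neg_le_of_abs_le hx)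
  have hupper : ∫ x, exp (h x) ∂ν ≤ exp c := by
    calc ∫ x, exp (h x) ∂ν ≤ ∫ _, exp c ∂ν := integral_mono_ae hint (integrable_const _) <| by
          filter_upwards [hc] with x hx using exp_le_exp.mpr (le_of_abs_le hx)
      _ = exp c := by simp
  have hpos : 0 < ∫ x, exp (h x) ∂ν := (exp_pos _).trans_le hlower
  rw [abs_le]
  exact ⟨(le_log_iff_exp_le hpos).mpr hlower, (log_le_iff_le_exp hpos).mpr hupper⟩

lemma integral_llr_tilted_self_le {ν : Measure α} [IsProbabilityMeasure ν] {h : α → ℝ} {c : ℝ}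
    (hint : Integrable (fun x ↦ exp (h x)) ν) (hc : ∀ᵐ x ∂ν, |h x| ≤ c) :
    ∫ x, llr (ν.tilted h) ν x ∂(ν.tilted h) ≤ 2 * c := by
  have := isProbabilityMeasure_tilted hint
  have hac := tilted_absolutelyContinuous ν h
  have hllr : ∀ᵐ x ∂(ν.tilted h), ‖llr (ν.tilted h) ν x‖ ≤ 2 * c := by
    filter_upwards [hac.ae_le (log_rnDeriv_tilted_left_self hint), hac.ae_le hc] with x hx hcx
    rw [llr, hx, Real.norm_eq_abs]
    calc |h x - log (∫ x, exp (h x) ∂ν)| ≤ |h x| + |log (∫ x, exp (h x) ∂ν)| := abs_sub _ _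
      _ ≤ 2 * c := by linarith [abs_log_integral_exp_le hint hc]
  calc ∫ x, llr (ν.tilted h) ν x ∂(ν.tilted h)
      ≤ ‖∫ x, llr (ν.tilted h) ν x ∂(ν.tilted h)‖ := le_norm_self _
    _ ≤ 2 * c := by simpa using norm_integral_le_of_norm_le_const hllr

end MeasureTheory

theorem gibbs_kl_bound_general
    {A : Type*} [MeasurableSpace A] (μ : Measure A)
    (β ε : ℝ) (hβ : 0 < β)
    (f g : A → ℝ)
    (hfg : ∀ᵐ a ∂μ, |f a - g a| ≤ ε)
    (hZf : Integrable (fun a => Real.exp (-f a / β)) μ)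
    (hZg : Integrable (fun a => Real.exp (-g a / β)) μ)
    (hZgpos : 0 < ∫ a, Real.exp (-g a / β) ∂μ) :
    let πf : Measure A := μ.withDensity fun a =>
      ENNReal.ofReal (Real.exp (-f a / β) / ∫ b, Real.exp (-f b / β) ∂μ)
    let πg : Measure A := μ.withDensity fun a =>
      ENNReal.ofReal (Real.exp (-g a / β) / ∫ b, Real.exp (-g b / β) ∂μ)
    ∫ a, Real.log ((πf.rnDeriv πg a).toReal) ∂πf ≤ 2 * ε / β := by
  set φf : A → ℝ := fun a => -f a / β
  set φg : A → ℝ := fun a => -g a / β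
  have : NeZero μ := ⟨fun hμ => by simp [hμ] at hZgpos⟩
  have := isProbabilityMeasure_tilted (f := φg) hZg
  have hbound : ∀ᵐ a ∂μ.tilted φg, |(φf - φg) a| ≤ ε / β := by
    refine (tilted_absolutelyContinuous μ φg).ae_le ?_
    filter_upwards [hfg] with a ha
    rw [Pi.sub_apply, show φf a - φg a = (g a - f a) / β by ring, abs_div, abs_of_pos hβ,
      abs_sub_comm]
    exact div_le_div_of_nonneg_right ha hβ.le
  show ∫ a, llr (μ.tilted φf) (μ.tilted φg) a ∂μ.tilted φf ≤ 2 * ε / β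
  rw [← tilted_tilted_sub hZg φf, mul_div_assoc]
  exact integral_llr_tilted_self_le (integrable_exp_sub_tilted hZg hZf) hbound

/-- **KL stability of Gibbs measures under energy perturbation.**
Let `μ` be σ-finite, `β > 0`, `ε ≥ 0`, and `f, g` measurable with `|f - g| ≤ ε` μ-a.e.,
such that `Z_f = ∫ exp(-f/β) dμ` and `Z_g = ∫ exp(-g/β) dμ` are finite (the integrands are
integrable) and strictly positive.  Let `π_f, π_g` be the Gibbs probability measures with
densities `w_f = exp(-f/β)/Z_f` and `w_g = exp(-g/β)/Z_g` with respect to `μ`.  Then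
`KL(π_f ‖ π_g) = ∫ log (dπ_f/dπ_g) dπ_f ≤ 2ε/β`. -/
theorem gibbs_kl_bound
    {A : Type*} [MeasurableSpace A] (μ : Measure A) [SigmaFinite μ]
    (β ε : ℝ) (hβ : 0 < β) (hε : 0 ≤ ε)
    (f g : A → ℝ) (hf : Measurable f) (hg : Measurable g)
    (hfg : ∀ᵐ a ∂μ, |f a - g a| ≤ ε)
    (hZf : Integrable (fun a => Real.exp (-f a / β)) μ)
    (hZfpos : 0 < ∫ a, Real.exp (-f a / β) ∂μ)
    (hZg : Integrable (fun a => Real.exp (-g a / β)) μ)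
    (hZgpos : 0 < ∫ a, Real.exp (-g a / β) ∂μ) :
    let πf : Measure A := μ.withDensity fun a =>
      ENNReal.ofReal (Real.exp (-f a / β) / ∫ b, Real.exp (-f b / β) ∂μ)
    let πg : Measure A := μ.withDensity fun a =>
      ENNReal.ofReal (Real.exp (-g a / β) / ∫ b, Real.exp (-g b / β) ∂μ)
    ∫ a, Real.log ((πf.rnDeriv πg a).toReal) ∂πf ≤ 2 * ε / β :=
  gibbs_kl_bound_general μ β ε hβ f g hfg hZf hZg hZgpos
end

section
/- Let μ be the Gaussian probability measure on ℝ^m with mean a₀ ∈ ℝ^m and covariance σ²·I (σ > 0), i.e., with Lebesgue density x ↦ (2πσ²)^(-m/2)·exp(-‖x - a₀‖²/(2σ²)). Let β > 0, ε ≥ 0, G ≥ 0, and let f, g : ℝ^m → ℝ be continuously differentiable functions satisfying, for all x ∈ ℝ^m: |f(x) - g(x)| ≤ ε, ‖∇f(x) - ∇g(x)‖ ≤ ε, ‖∇f(x)‖ ≤ G, and ‖∇g(x)‖ ≤ G. Assume the functions exp(-f/β), exp(-g/β), exp(-f/β)·‖∇f‖ and exp(-g/β)·‖∇g‖ are μ-integrable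 with ∫ exp(-f/β) dμ > 0 and ∫ exp(-g/β) dμ > 0. Define the Gibbs-weighted scores φ_f = -(1/β)·(∫ exp(-f/β)·∇f dμ)/(∫ exp(-f/β) dμ) and φ_g = -(1/β)·(∫ exp(-g/β)·∇g dμ)/(∫ exp(-g/β) dμ). Then ‖φ_f - φ_g‖ ≤ (1/β)·(ε + G·(exp(2ε/β) - 1)). -/
open MeasureTheory

/-!
The Gibbs weights `exp (-f/β)` and `exp (-g/β)` agree up to a factor `exp (±ε/β)`, so the
normalising constants `Z` and the weighted gradient integrals `V` differ by a relative error
`K = exp (ε/β) - 1` (plus `ε` from the gradient gap for `V`). Splitting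
`Z_f⁻¹ V_f - Z_g⁻¹ V_g = Z_f⁻¹ (V_f - V_g) + (Z_f⁻¹ - Z_g⁻¹) V_g` bounds the difference of the
weighted means by `ε + 2 G K`, and `2 K ≤ exp (2ε/β) - 1` since `(exp (ε/β) - 1)² ≥ 0`.
-/

lemma abs_exp_sub_one_le_exp_abs_sub_one (t : ℝ) : |Real.exp t - 1| ≤ Real.exp |t| - 1 := by
  rcases le_total 0 t with ht | ht
  · rw [abs_of_nonneg ht, abs_of_nonneg (sub_nonneg.2 (Real.one_le_exp ht))]
  · rw [abs_of_nonpos ht, abs_of_nonpos (sub_nonpos.2 (Real.exp_le_one_iff.2 ht))]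
    linarith [Real.add_one_le_exp t, Real.add_one_le_exp (-t)]

lemma abs_exp_sub_exp_le {a b c : ℝ} (h : |a - b| ≤ c) :
    |Real.exp a - Real.exp b| ≤ (Real.exp c - 1) * Real.exp a := by
  have hba : Real.exp a - Real.exp b = -(Real.exp a * (Real.exp (b - a) - 1)) := by
    rw [Real.exp_sub]; field_simp; ring
  rw [hba, abs_neg, abs_mul, abs_of_pos (Real.exp_pos a), mul_comm]
  gcongr
  exact (abs_exp_sub_one_le_exp_abs_sub_one _).trans (by rw [abs_sub_comm] at h; gcongr)

lemma two_mul_exp_sub_one_le (x : ℝ) : 2 * (Real.exp x - 1) ≤ Real.exp (2 * x) - 1 := by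
  rw [two_mul x, Real.exp_add]
  nlinarith [sq_nonneg (Real.exp x - 1)]

lemma norm_smul_sub_smul_le {E : Type*} [SeminormedAddCommGroup E] [NormedSpace ℝ E]
    (a b : ℝ) (x y : E) : ‖a • x - b • y‖ ≤ |a| * ‖x - y‖ + |a - b| * ‖y‖ := by
  have hsplit : a • x - b • y = a • (x - y) + (a - b) • y := by
    rw [smul_sub, sub_smul]; abel
  rw [hsplit, ← Real.norm_eq_abs, ← Real.norm_eq_abs, ← norm_smul, ← norm_smul]
  exact norm_add_le _ _

lemma norm_inv_smul_sub_inv_smul_le {E : Type*} [SeminormedAddCommGroup E] [NormedSpace ℝ E]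
    {Z₁ Z₂ K ε G : ℝ} {V₁ V₂ : E} (hZ₁ : 0 < Z₁) (hZ₂ : 0 < Z₂)
    (hZ : |Z₁ - Z₂| ≤ K * Z₁) (hV : ‖V₁ - V₂‖ ≤ (ε + G * K) * Z₁) (hV₂ : ‖V₂‖ ≤ G * Z₂) :
    ‖Z₁⁻¹ • V₁ - Z₂⁻¹ • V₂‖ ≤ ε + 2 * (G * K) := by
  have hK : 0 ≤ K := nonneg_of_mul_nonneg_left ((abs_nonneg _).trans hZ) hZ₁
  have hinv : |Z₁⁻¹ - Z₂⁻¹| ≤ K * Z₂⁻¹ := by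
    rw [inv_sub_inv hZ₁.ne' hZ₂.ne', abs_div, abs_of_pos (mul_pos hZ₁ hZ₂), abs_sub_comm,
      div_le_iff₀ (mul_pos hZ₁ hZ₂)]
    calc |Z₁ - Z₂| ≤ K * Z₁ := hZ
      _ = K * Z₂⁻¹ * (Z₁ * Z₂) := by field_simp
  calc ‖Z₁⁻¹ • V₁ - Z₂⁻¹ • V₂‖ ≤ |Z₁⁻¹| * ‖V₁ - V₂‖ + |Z₁⁻¹ - Z₂⁻¹| * ‖V₂‖ :=
        norm_smul_sub_smul_le _ _ _ _
    _ ≤ Z₁⁻¹ * ((ε + G * K) * Z₁) + K * Z₂⁻¹ * (G * Z₂) := by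
        rw [abs_of_pos (inv_pos.2 hZ₁)]
        gcongr
    _ = ε + 2 * (G * K) := by field_simp; ring

section WeightedMean

variable {α E : Type*} [MeasurableSpace α] {μ : Measure α}
  [NormedAddCommGroup E] [NormedSpace ℝ E] {w w₁ w₂ : α → ℝ} {v v₁ v₂ : α → E} {K ε G : ℝ}

variable (μ) in
noncomputable def weightedMean (w : α → ℝ) (v : α → E) : E :=
  (∫ x, w x ∂μ)⁻¹ • ∫ x, w x • v x ∂μ

lemma Integrable.smul_of_mul_norm (h : Integrable (fun x => w x * ‖v x‖) μ)
    (hw : AEStronglyMeasurable w μ) (hv : AEStronglyMeasurable v μ) :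
    Integrable (fun x => w x • v x) μ :=
  h.norm.mono' (hw.smul hv) (ae_of_all _ fun x => by simp [norm_smul])

lemma abs_integral_sub_integral_le (hw₁ : Integrable w₁ μ) (hw₂ : Integrable w₂ μ)
    (hw : ∀ x, |w₁ x - w₂ x| ≤ K * w₁ x) :
    |∫ x, w₁ x ∂μ - ∫ x, w₂ x ∂μ| ≤ K * ∫ x, w₁ x ∂μ := by
  rw [← integral_sub hw₁ hw₂, ← integral_const_mul]
  exact norm_integral_le_of_norm_le (f := fun x => w₁ x - w₂ x) (hw₁.const_mul K)
    (ae_of_all _ hw)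

lemma norm_integral_smul_le (hw₀ : ∀ x, 0 ≤ w x) (hw : Integrable w μ)
    (hv : ∀ x, ‖v x‖ ≤ G) : ‖∫ x, w x • v x ∂μ‖ ≤ G * ∫ x, w x ∂μ := by
  rw [← integral_const_mul]
  refine norm_integral_le_of_norm_le (hw.const_mul G) (ae_of_all _ fun x => ?_)
  rw [norm_smul, Real.norm_of_nonneg (hw₀ x), mul_comm]
  exact mul_le_mul_of_nonneg_right (hv x) (hw₀ x)

lemma norm_integral_smul_sub_integral_smul_le (hw₁₀ : ∀ x, 0 ≤ w₁ x) (hw₁ : Integrable w₁ μ)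
    (hwv₁ : Integrable (fun x => w₁ x • v₁ x) μ) (hwv₂ : Integrable (fun x => w₂ x • v₂ x) μ)
    (hw : ∀ x, |w₁ x - w₂ x| ≤ K * w₁ x) (hv : ∀ x, ‖v₁ x - v₂ x‖ ≤ ε)
    (hv₂ : ∀ x, ‖v₂ x‖ ≤ G) :
    ‖∫ x, w₁ x • v₁ x ∂μ - ∫ x, w₂ x • v₂ x ∂μ‖ ≤ (ε + G * K) * ∫ x, w₁ x ∂μ := by
  rw [← integral_sub hwv₁ hwv₂, ← integral_const_mul]
  refine norm_integral_le_of_norm_le (hw₁.const_mul _) (ae_of_all _ fun x => ?_)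
  calc ‖w₁ x • v₁ x - w₂ x • v₂ x‖ ≤ |w₁ x| * ‖v₁ x - v₂ x‖ + |w₁ x - w₂ x| * ‖v₂ x‖ :=
        norm_smul_sub_smul_le _ _ _ _
    _ ≤ w₁ x * ε + K * w₁ x * G := by
        rw [abs_of_nonneg (hw₁₀ x)]
        gcongr
        exacts [hw₁₀ x, hv x, (abs_nonneg _).trans (hw x), hw x, hv₂ x]
    _ = (ε + G * K) * w₁ x := by ring

lemma norm_weightedMean_sub_weightedMean_le (hw₁₀ : ∀ x, 0 ≤ w₁ x) (hw₂₀ : ∀ x, 0 ≤ w₂ x)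
    (hw₁ : Integrable w₁ μ) (hw₂ : Integrable w₂ μ)
    (hwv₁ : Integrable (fun x => w₁ x • v₁ x) μ) (hwv₂ : Integrable (fun x => w₂ x • v₂ x) μ)
    (hZ₁ : 0 < ∫ x, w₁ x ∂μ) (hZ₂ : 0 < ∫ x, w₂ x ∂μ)
    (hw : ∀ x, |w₁ x - w₂ x| ≤ K * w₁ x) (hv : ∀ x, ‖v₁ x - v₂ x‖ ≤ ε)
    (hv₂ : ∀ x, ‖v₂ x‖ ≤ G) :
    ‖weightedMean μ w₁ v₁ - weightedMean μ w₂ v₂‖ ≤ ε + 2 * (G * K) :=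
  norm_inv_smul_sub_inv_smul_le hZ₁ hZ₂ (abs_integral_sub_integral_le hw₁ hw₂ hw)
    (norm_integral_smul_sub_integral_smul_le hw₁₀ hw₁ hwv₁ hwv₂ hw hv hv₂)
    (norm_integral_smul_le hw₂₀ hw₂ hv₂)

end WeightedMean

lemma measurable_gradient {F : Type*} [NormedAddCommGroup F] [InnerProductSpace ℝ F]
    [CompleteSpace F] [MeasurableSpace F] [BorelSpace F] (f : F → ℝ) :
    Measurable (gradient f) := by
  unfold gradient; fun_prop

theorem gibbs_weighted_score_stability_general
    (m : ℕ) (a₀ : EuclideanSpace ℝ (Fin m)) (σ : ℝ)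
    (β ε G : ℝ) (hβ : 0 < β) (hG : 0 ≤ G)
    (f g : EuclideanSpace ℝ (Fin m) → ℝ)
    (hval : ∀ x, |f x - g x| ≤ ε)
    (hgradgap : ∀ x, ‖gradient f x - gradient g x‖ ≤ ε)
    (hGg : ∀ x, ‖gradient g x‖ ≤ G) :
    let μ : Measure (EuclideanSpace ℝ (Fin m)) :=
      volume.withDensity fun x => ENNReal.ofReal
        ((2 * Real.pi * σ ^ 2) ^ (-(m : ℝ) / 2) *
          Real.exp (-‖x - a₀‖ ^ 2 / (2 * σ ^ 2)))
    Integrable (fun x => Real.exp (-f x / β)) μ →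
    Integrable (fun x => Real.exp (-f x / β) * ‖gradient f x‖) μ →
    Integrable (fun x => Real.exp (-g x / β)) μ →
    Integrable (fun x => Real.exp (-g x / β) * ‖gradient g x‖) μ →
    0 < (∫ x, Real.exp (-f x / β) ∂μ) →
    0 < (∫ x, Real.exp (-g x / β) ∂μ) →
    ‖(-(1 / β)) • ((∫ x, Real.exp (-f x / β) ∂μ)⁻¹ •
          ∫ x, Real.exp (-f x / β) • gradient f x ∂μ)
      - (-(1 / β)) • ((∫ x, Real.exp (-g x / β) ∂μ)⁻¹ •
          ∫ x, Real.exp (-g x / β) • gradient g x ∂μ)‖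
      ≤ (1 / β) * (ε + G * (Real.exp (2 * ε / β) - 1)) := by
  intro μ hIf hIf' hIg hIg' hZf hZg
  have hweight : ∀ x, |Real.exp (-f x / β) - Real.exp (-g x / β)|
      ≤ (Real.exp (ε / β) - 1) * Real.exp (-f x / β) := fun x => abs_exp_sub_exp_le <| by
    rw [← sub_div, abs_div, abs_of_pos hβ, neg_sub_neg, abs_sub_comm]
    exact div_le_div_of_nonneg_right (hval x) hβ.le
  have hmean := norm_weightedMean_sub_weightedMean_le (fun _ => (Real.exp_pos _).le)
    (fun _ => (Real.exp_pos _).le) hIf hIg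
    (Integrable.smul_of_mul_norm hIf' hIf.aestronglyMeasurable
      (measurable_gradient f).aestronglyMeasurable)
    (Integrable.smul_of_mul_norm hIg' hIg.aestronglyMeasurable
      (measurable_gradient g).aestronglyMeasurable)
    hZf hZg hweight hgradgap hGg
  rw [← smul_sub, norm_smul, norm_neg, Real.norm_of_nonneg (one_div_pos.2 hβ).le]
  gcongr
  calc _ ≤ ε + 2 * (G * (Real.exp (ε / β) - 1)) := hmean
    _ ≤ ε + G * (Real.exp (2 * ε / β) - 1) := by
        rw [mul_div_assoc]
        nlinarith [two_mul_exp_sub_one_le (ε / β)]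

/-- **Corollary: stability of the Gibbs-weighted score under Lagrangian approximation.**
Let `μ` be the Gaussian measure `N(a₀, σ²I)` on `ℝ^m` (realized as the measure with
Lebesgue density `x ↦ (2πσ²)^(-m/2)·exp(-‖x - a₀‖²/(2σ²))`), `β > 0`, `ε ≥ 0`, `G ≥ 0`,
and let `f, g : ℝ^m → ℝ` be `C¹` with `|f - g| ≤ ε`, `‖∇f - ∇g‖ ≤ ε`, `‖∇f‖ ≤ G`,
`‖∇g‖ ≤ G` everywhere.  Assume `exp(-f/β)`, `exp(-g/β)`, `exp(-f/β)·‖∇f‖` and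
`exp(-g/β)·‖∇g‖` are μ-integrable with `∫ exp(-f/β) dμ > 0` and `∫ exp(-g/β) dμ > 0`.
Then the Gibbs-weighted scores
`φ_f = -(1/β)·(∫ exp(-f/β)·∇f dμ)/(∫ exp(-f/β) dμ)` and `φ_g` (analogously) satisfy
`‖φ_f - φ_g‖ ≤ (1/β)·(ε + G·(exp(2ε/β) - 1))`. -/
theorem gibbs_weighted_score_stability
    (m : ℕ) (a₀ : EuclideanSpace ℝ (Fin m)) (σ : ℝ) (hσ : 0 < σ)
    (β ε G : ℝ) (hβ : 0 < β) (hε : 0 ≤ ε) (hG : 0 ≤ G)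
    (f g : EuclideanSpace ℝ (Fin m) → ℝ)
    (hf : ContDiff ℝ 1 f) (hg : ContDiff ℝ 1 g)
    (hval : ∀ x, |f x - g x| ≤ ε)
    (hgradgap : ∀ x, ‖gradient f x - gradient g x‖ ≤ ε)
    (hGf : ∀ x, ‖gradient f x‖ ≤ G) (hGg : ∀ x, ‖gradient g x‖ ≤ G) :
    let μ : Measure (EuclideanSpace ℝ (Fin m)) :=
      volume.withDensity fun x => ENNReal.ofReal
        ((2 * Real.pi * σ ^ 2) ^ (-(m : ℝ) / 2) *
          Real.exp (-‖x - a₀‖ ^ 2 / (2 * σ ^ 2)))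
    Integrable (fun x => Real.exp (-f x / β)) μ →
    Integrable (fun x => Real.exp (-f x / β) * ‖gradient f x‖) μ →
    Integrable (fun x => Real.exp (-g x / β)) μ →
    Integrable (fun x => Real.exp (-g x / β) * ‖gradient g x‖) μ →
    0 < (∫ x, Real.exp (-f x / β) ∂μ) →
    0 < (∫ x, Real.exp (-g x / β) ∂μ) →
    ‖(-(1 / β)) • ((∫ x, Real.exp (-f x / β) ∂μ)⁻¹ •
          ∫ x, Real.exp (-f x / β) • gradient f x ∂μ)
      - (-(1 / β)) • ((∫ x, Real.exp (-g x / β) ∂μ)⁻¹ •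
          ∫ x, Real.exp (-g x / β) • gradient g x ∂μ)‖
      ≤ (1 / β) * (ε + G * (Real.exp (2 * ε / β) - 1)) :=
  gibbs_weighted_score_stability_general m a₀ σ β ε G hβ hG f g hval hgradgap hGg
end
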